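/- arXiv:2212.02305 — 6 statements merged into one kernel-verified Lean document; each statement's English description precedes it below -/
import Mathlib

section
/- Let B ∈ ℝ^{n×n} be a symmetric circulant matrix and H ∈ ℝ^{m×n} the uniform selection operator picking every ζ-th component, where n = ζm with ζ a positive integer. Then H B Hᵀ ∈ ℝ^{m×m} is a symmetric circulant matrix whose i-th eigenvalue (with respect to the m-point Fourier basis) is λ_i(H B Hᵀ) = (1/ζ) Σ_{r=0}^{ζ-1} λ_{i+rm}(B), where λ_j(B) denotes the j-th Fourier eigenvalue of B. -/
open Matrix Polynomial

/-!
Since `H` picks the entries with indices `ζ p`, `H B Hᵀ` is the submatrix `B (ζ p) (ζ q)`, i.e.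
the restriction of `B` to the subgroup `ζ ℤ/nℤ ≅ ℤ/mℤ`; circulance and symmetry restrict along
this additive embedding. For the eigenvalues, averaging the `n`-point DFT of the first column of
`B` over the aliased frequencies `i + r m` multiplies its `j`-th term by `∑_{r<ζ} ω_ζ^{r j}`, which
is `ζ` when `ζ ∣ j` and `0` otherwise; what survives is the `m`-point DFT of the decimated column
`B (ζ k) 0`.
-/

/-- The (unnormalised-frequency) `i`-th Fourier eigenvector of size-`m` circulant
matrices: `f^(i)_p = (1/√m) exp(-2πI i p / m)`. -/
noncomputable def fourierVec (m : ℕ) [NeZero m] (i : ZMod m) : ZMod m → ℂ :=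
  fun p => (1 / (Real.sqrt m : ℂ)) *
    Complex.exp (-(2 * Real.pi * Complex.I * (i.val : ℂ) * (p.val : ℂ)) / m)

/-- The `i`-th Fourier eigenvalue of a (circulant) matrix `A`, i.e. the `i`-th DFT
coefficient of its first column: `λ_i(A) = Σ_k A k 0 · exp(2πI i k / m)`. -/
noncomputable def fourierEig {m : ℕ} [NeZero m] (A : Matrix (ZMod m) (ZMod m) ℂ)
    (i : ZMod m) : ℂ :=
  ∑ k : ZMod m, A k 0 * Complex.exp (2 * Real.pi * Complex.I * (i.val : ℂ) * (k.val : ℂ) / m)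

/-- A matrix indexed by `ZMod m` is circulant iff it is invariant under simultaneous
cyclic shifts of rows and columns. -/
def IsCirculant {m : ℕ} {α : Type*} (A : Matrix (ZMod m) (ZMod m) α) : Prop :=
  ∀ i j d : ZMod m, A (i + d) (j + d) = A i j

/-- The uniform selection operator `H : ℝ^{m×n}` picking every `ζ`-th component:
`(Hx)_p = x_{ζ p}`. -/
noncomputable def selectionOp (ζ m n : ℕ) [NeZero m] [NeZero n] :
    Matrix (ZMod m) (ZMod n) ℝ :=
  Matrix.of fun p q => if q.val = ζ * p.val then 1 else 0

/-- The periodic second-difference (Laplacian) matrix with grid spacing `h`,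
stencil `(1, -2, 1)/h²` with periodic boundary conditions. -/
noncomputable def lap (m : ℕ) [NeZero m] (h : ℝ) : Matrix (ZMod m) (ZMod m) ℝ :=
  Matrix.of fun i j =>
    ((if i = j then (-2 : ℝ) else 0) + (if i = j + 1 then 1 else 0) +
      (if j = i + 1 then 1 else 0)) / h ^ 2

/-- The diffusion-modelled covariance matrix
`(σ² ν L / h) (I - L² Δ_h)^{-M}` on an `m`-point periodic grid. -/
noncomputable def diffCov (m : ℕ) [NeZero m] (σ ν L h : ℝ) (M : ℕ) :
    Matrix (ZMod m) (ZMod m) ℝ :=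
  (σ ^ 2 * ν * L / h) • ((1 - (L ^ 2) • lap m h) ^ M)⁻¹

/-- The spectral condition number `κ(A) = λ_max(A)/λ_min(A)` (via the real spectrum). -/
noncomputable def condNum {k : Type*} [Fintype k] [DecidableEq k]
    (A : Matrix k k ℝ) : ℝ :=
  sSup (spectrum ℝ A) / sInf (spectrum ℝ A)

def strideEmbed (ζ n : ℕ) {m : ℕ} (p : ZMod m) : ZMod n := ((ζ * p.val : ℕ) : ZMod n)

section strideEmbed

variable {ζ m n : ℕ}

theorem val_strideEmbed [NeZero m] [NeZero n] (hn : n = ζ * m) (p : ZMod m) :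
    (strideEmbed ζ n p).val = ζ * p.val := by
  have hζ : ζ ≠ 0 := left_ne_zero_of_mul (hn ▸ NeZero.ne n)
  exact ZMod.val_cast_of_lt (hn ▸ Nat.mul_lt_mul_of_pos_left p.val_lt (Nat.pos_of_ne_zero hζ))

theorem strideEmbed_injective [NeZero m] [NeZero n] (hn : n = ζ * m) :
    Function.Injective (strideEmbed ζ n : ZMod m → ZMod n) := by
  intro p q h
  have hζ : ζ ≠ 0 := left_ne_zero_of_mul (hn ▸ NeZero.ne n)
  have hval := congrArg ZMod.val h
  rw [val_strideEmbed hn, val_strideEmbed hn] at hval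
  exact ZMod.val_injective m (mul_left_cancel₀ hζ hval)

@[simp]
theorem strideEmbed_zero : strideEmbed ζ n (0 : ZMod m) = 0 := by
  simp [strideEmbed]

theorem strideEmbed_add [NeZero m] (hn : n = ζ * m) (p q : ZMod m) :
    strideEmbed ζ n (p + q) = strideEmbed ζ n p + strideEmbed ζ n q := by
  rw [strideEmbed, strideEmbed, strideEmbed, ← Nat.cast_add, ← Nat.mul_add,
    ZMod.natCast_eq_natCast_iff, hn, ZMod.val_add]
  exact (Nat.mod_modEq _ m).mul_left' ζ

theorem exists_strideEmbed_eq_of_dvd_val [NeZero n] (hn : n = ζ * m) {j : ZMod n}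
    (hj : ζ ∣ j.val) : ∃ p : ZMod m, strideEmbed ζ n p = j := by
  obtain ⟨c, hc⟩ := hj
  have hcm : c < m := Nat.lt_of_mul_lt_mul_left (a := ζ) (by rw [← hc, ← hn]; exact j.val_lt)
  refine ⟨c, ?_⟩
  rw [strideEmbed, ZMod.val_cast_of_lt hcm, ← hc, ZMod.natCast_zmod_val]

theorem selectionOp_eq_submatrix_one [NeZero m] [NeZero n] (hn : n = ζ * m) :
    selectionOp ζ m n = (1 : Matrix (ZMod n) (ZMod n) ℝ).submatrix (strideEmbed ζ n) id := by
  ext p q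
  rw [selectionOp, of_apply, submatrix_apply, id, one_apply]
  exact if_congr (by rw [← val_strideEmbed hn, (ZMod.val_injective n).eq_iff, eq_comm]) rfl rfl

theorem selectionOp_mul_mul_transpose [NeZero m] [NeZero n] (hn : n = ζ * m)
    (B : Matrix (ZMod n) (ZMod n) ℝ) :
    selectionOp ζ m n * B * (selectionOp ζ m n)ᵀ =
      B.submatrix (strideEmbed ζ n) (strideEmbed ζ n) := by
  rw [selectionOp_eq_submatrix_one hn, transpose_submatrix, transpose_one]
  conv_lhs => rw [← submatrix_id_id B]
  rw [← submatrix_mul _ _ _ _ _ Function.bijective_id,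
    ← submatrix_mul _ _ _ _ _ Function.bijective_id, one_mul, mul_one]

end strideEmbed

theorem IsCirculant.submatrix {α : Type*} {m n : ℕ} {A : Matrix (ZMod n) (ZMod n) α}
    (hA : IsCirculant A) (f : ZMod m → ZMod n) (hf : ∀ p q, f (p + q) = f p + f q) :
    IsCirculant (A.submatrix f f) := by
  intro i j d
  simp only [submatrix_apply, hf]
  exact hA _ _ _

theorem IsPrimitiveRoot.sum_range_pow_mul {R : Type*} [CommRing R] [IsDomain R] {ω : R} {k : ℕ}
    (hω : IsPrimitiveRoot ω k) (j : ℕ) :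
    ∑ r ∈ Finset.range k, ω ^ (r * j) = if k ∣ j then (k : R) else 0 := by
  simp_rw [mul_comm _ j, pow_mul]
  split_ifs with hj
  · simp [(hω.pow_eq_one_iff_dvd j).2 hj]
  · have hgeom : (∑ r ∈ Finset.range k, (ω ^ j) ^ r) * (ω ^ j - 1) = 0 := by
      rw [geom_sum_mul, ← pow_mul, mul_comm, pow_mul, hω.pow_eq_one, one_pow, sub_self]
    exact (mul_eq_zero.1 hgeom).resolve_right
      (sub_ne_zero.2 (mt (hω.pow_eq_one_iff_dvd j).1 hj))

theorem IsPrimitiveRoot.sum_range_sum_pow_alias {R : Type*} [CommRing R] [IsDomain R] {ω : R}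
    {ζ m n : ℕ} [NeZero m] [NeZero n] (hω : IsPrimitiveRoot ω n) (hn : n = ζ * m)
    (f : ZMod n → R) (i : ℕ) :
    ∑ r ∈ Finset.range ζ, ∑ j : ZMod n, f j * ω ^ ((i + r * m) * j.val) =
      ζ * ∑ k : ZMod m, f (strideEmbed ζ n k) * (ω ^ ζ) ^ (i * k.val) := by
  have hωm : IsPrimitiveRoot (ω ^ m) ζ := hω.pow (NeZero.pos n) (hn.trans (mul_comm _ _))
  calc ∑ r ∈ Finset.range ζ, ∑ j : ZMod n, f j * ω ^ ((i + r * m) * j.val)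
      = ∑ j : ZMod n, f j * ω ^ (i * j.val) * ∑ r ∈ Finset.range ζ, (ω ^ m) ^ (r * j.val) := by
        rw [Finset.sum_comm]
        refine Finset.sum_congr rfl fun j _ => ?_
        rw [Finset.mul_sum]
        refine Finset.sum_congr rfl fun r _ => ?_
        rw [← pow_mul, mul_assoc, ← pow_add]
        ring_nf
    _ = ∑ j : ZMod n, if ζ ∣ j.val then (ζ : R) * (f j * ω ^ (i * j.val)) else 0 := by
        simp_rw [hωm.sum_range_pow_mul, mul_ite, mul_zero, mul_comm]
    _ = ∑ k : ZMod m, (ζ : R) * (f (strideEmbed ζ n k) * ω ^ (i * (strideEmbed ζ n k).val)) :=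
        (Fintype.sum_of_injective _ (strideEmbed_injective hn) _
          (fun j : ZMod n => if ζ ∣ j.val then (ζ : R) * (f j * ω ^ (i * j.val)) else 0)
          (fun j hj => if_neg fun hdvd => hj (exists_strideEmbed_eq_of_dvd_val hn hdvd))
          (fun k => (if_pos ⟨k.val, val_strideEmbed hn k⟩).symm)).symm
    _ = ζ * ∑ k : ZMod m, f (strideEmbed ζ n k) * (ω ^ ζ) ^ (i * k.val) := by
        rw [Finset.mul_sum]
        refine Finset.sum_congr rfl fun k _ => ?_
        rw [val_strideEmbed hn, ← pow_mul]
        ring_nf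

theorem fourierEig_eq_sum_pow {m : ℕ} [NeZero m] (A : Matrix (ZMod m) (ZMod m) ℂ) (i : ZMod m) :
    fourierEig A i =
      ∑ k : ZMod m, A k 0 * Complex.exp (2 * Real.pi * Complex.I / m) ^ (i.val * k.val) := by
  refine Finset.sum_congr rfl fun k _ => ?_
  rw [← Complex.exp_nat_mul]
  push_cast
  ring_nf

theorem fourierEig_natCast {m : ℕ} [NeZero m] (A : Matrix (ZMod m) (ZMod m) ℂ) (a : ℕ) :
    fourierEig A a =
      ∑ k : ZMod m, A k 0 * Complex.exp (2 * Real.pi * Complex.I / m) ^ (a * k.val) := by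
  rw [fourierEig_eq_sum_pow, ZMod.val_natCast]
  refine Finset.sum_congr rfl fun k _ => ?_
  rw [pow_mul, pow_mul,
    ← pow_eq_pow_mod a (Complex.isPrimitiveRoot_exp m (NeZero.ne m)).pow_eq_one]

theorem Complex.exp_two_pi_I_div_pow_of_eq_mul {ζ m n : ℕ} (hn : n = ζ * m) (hζ : ζ ≠ 0) :
    Complex.exp (2 * Real.pi * Complex.I / n) ^ ζ = Complex.exp (2 * Real.pi * Complex.I / m) := by
  rw [← Complex.exp_nat_mul, hn]
  push_cast
  field_simp

theorem stmt1_general (ζ m n : ℕ) [NeZero m] [NeZero n] (hn : n = ζ * m)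
    (B : Matrix (ZMod n) (ZMod n) ℝ) (hBcirc : IsCirculant B) (hBsymm : B.IsSymm)
    (H : Matrix (ZMod m) (ZMod n) ℝ) (hH : H = selectionOp ζ m n) :
    IsCirculant (H * B * H.transpose) ∧ (H * B * H.transpose).IsSymm ∧
      ∀ i : ZMod m,
        fourierEig ((H * B * H.transpose).map Complex.ofReal) i =
          (1 / (ζ : ℂ)) * ∑ r ∈ Finset.range ζ,
            fourierEig (B.map Complex.ofReal) ((i.val + r * m : ℕ) : ZMod n) := by
  subst hH
  rw [selectionOp_mul_mul_transpose hn]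
  refine ⟨hBcirc.submatrix _ (strideEmbed_add hn), hBsymm.submatrix _, fun i => ?_⟩
  have hζ : ζ ≠ 0 := left_ne_zero_of_mul (hn ▸ NeZero.ne n)
  have hω := Complex.isPrimitiveRoot_exp n (NeZero.ne n)
  simp_rw [fourierEig_natCast, map_apply]
  rw [hω.sum_range_sum_pow_alias hn, one_div, inv_mul_cancel_left₀ (Nat.cast_ne_zero.2 hζ),
    fourierEig_eq_sum_pow, Complex.exp_two_pi_I_div_pow_of_eq_mul hn hζ]
  simp only [map_apply, submatrix_apply, strideEmbed_zero]

/-- If `B` is a symmetric circulant `n×n` matrix and `H` is the uniform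
selection operator picking every `ζ`-th component (`n = ζ m`), then `H B Hᵀ` is a
symmetric circulant `m×m` matrix with Fourier eigenvalues
`λ_i(H B Hᵀ) = (1/ζ) Σ_{r<ζ} λ_{i+rm}(B)`. -/
theorem stmt1 (ζ m n : ℕ) [NeZero m] [NeZero n] (hζ : 0 < ζ) (hn : n = ζ * m)
    (B : Matrix (ZMod n) (ZMod n) ℝ) (hBcirc : IsCirculant B) (hBsymm : B.IsSymm)
    (H : Matrix (ZMod m) (ZMod n) ℝ) (hH : H = selectionOp ζ m n) :
    IsCirculant (H * B * H.transpose) ∧ (H * B * H.transpose).IsSymm ∧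
      ∀ i : ZMod m,
        fourierEig ((H * B * H.transpose).map Complex.ofReal) i =
          (1 / (ζ : ℂ)) * ∑ r ∈ Finset.range ζ,
            fourierEig (B.map Complex.ofReal) ((i.val + r * m : ℕ) : ZMod n) :=
  stmt1_general ζ m n hn B hBcirc hBsymm H hH
end

section
/- Let S_o = I_m + R^{−1}B_o with eigenvalues λ_i(S_o) = 1 + α[1+4L̃_o²sin²(πi/m)]^{M_o}/[1+4L̃_{b/o}²sin²(πi/m)]^{M_b}. If the conditions (i) L̃_o²M_o > L̃_{b/o}²M_b, (ii) M_o < M_b, (iii) L̃_{b/o}²M_b − L̃_o²M_o > 4L̃_{b/o}²L̃_o²(M_o − M_b) do NOT all hold, then κ(S_o) ≤ 1 + α·max{ (1+4L̃_o²)^{M_o}/(1+4L̃_{b/o}²)^{M_b}, 1 }. -/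
/-!
Conjugation by the discrete Fourier matrix on `ZMod m` diagonalises the periodic Laplacian, with
eigenvalues `-4 sin²(πi/m)/h²`, hence also every diffusion covariance and `S_o = I + R⁻¹B_o`, whose
eigenvalues are `1 + α g(sin²(πi/m))` with `g x = (1 + a x)^{M_o} / (1 + b x)^{M_b}`,
`a = 4L̃_o²`, `b = 4L̃_{b/o}²`. They are all `≥ 1`, so `κ(S_o) ≤ λ_max(S_o)`. The logarithmic
derivative of `g` has the sign of the affine function `φ x = (a M_o - b M_b) + a b (M_o - M_b) x`.
When the three conditions fail, `φ` is not both positive at `0` and negative at `1`, so `g` first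
decreases and then increases on `[0, 1]` and is maximal at an endpoint.
-/

open Matrix Polynomial

open Set

namespace Matrix

variable {n : Type*} [Fintype n] [DecidableEq n]

lemma map_nonsing_inv_of_isUnit_det {R S F : Type*} [CommRing R] [CommRing S]
    [FunLike F (Matrix n n R) (Matrix n n S)] [RingHomClass F (Matrix n n R) (Matrix n n S)]
    (f : F) {A : Matrix n n R} (hA : IsUnit A.det) :
    f A⁻¹ = (f A)⁻¹ :=
  (inv_eq_right_inv (by rw [← map_mul, mul_nonsing_inv A hA, map_one])).symm

noncomputable def ofRealUnitsConj (P : (Matrix n n ℂ)ˣ) : Matrix n n ℝ →ₐ[ℝ] Matrix n n ℂ :=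
  (MulSemiringAction.toAlgEquiv ℝ (Matrix n n ℂ) (ConjAct.toConjAct P⁻¹)).toAlgHom.comp
    Complex.ofRealAm.mapMatrix

variable (P : (Matrix n n ℂ)ˣ)

lemma ofRealUnitsConj_apply (A : Matrix n n ℝ) :
    ofRealUnitsConj P A = (P : Matrix n n ℂ)⁻¹ * A.map Complex.ofReal * P := by
  simp [ofRealUnitsConj, ConjAct.units_smul_def, coe_units_inv]

lemma ofRealUnitsConj_eq_of_mul_eq {A : Matrix n n ℝ} {D : Matrix n n ℂ}
    (h : A.map Complex.ofReal * P = P * D) : ofRealUnitsConj P A = D := by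
  rw [ofRealUnitsConj_apply, mul_assoc, h, ← mul_assoc, ← coe_units_inv, Units.inv_mul, one_mul]

lemma det_ofRealUnitsConj (A : Matrix n n ℝ) : (ofRealUnitsConj P A).det = A.det := by
  rw [ofRealUnitsConj_apply, ← coe_units_inv, det_units_conj']
  exact (RingHom.map_det Complex.ofRealHom A).symm

lemma charpoly_ofRealUnitsConj (A : Matrix n n ℝ) :
    (ofRealUnitsConj P A).charpoly = A.charpoly.map Complex.ofRealHom := by
  rw [ofRealUnitsConj_apply, charpoly_units_conj', ← charpoly_map]
  rfl

lemma spectrum_eq_range_of_ofRealUnitsConj_eq_diagonal {A : Matrix n n ℝ} {d : n → ℝ}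
    (h : ofRealUnitsConj P A = diagonal fun i => (d i : ℂ)) : spectrum ℝ A = range d := by
  ext x
  rw [mem_spectrum_iff_isRoot_charpoly,
    ← Polynomial.isRoot_map_iff (f := Complex.ofRealHom) Complex.ofReal_injective,
    ← charpoly_ofRealUnitsConj, h, charpoly_diagonal, Polynomial.isRoot_prod]
  simp [sub_eq_zero, eq_comm]

lemma ofRealUnitsConj_inv_of_eq_diagonal {A : Matrix n n ℝ} {d : n → ℝ} (hd : ∀ i, d i ≠ 0)
    (h : ofRealUnitsConj P A = diagonal fun i => (d i : ℂ)) :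
    ofRealUnitsConj P A⁻¹ = diagonal fun i => ((d i)⁻¹ : ℂ) := by
  have hA : IsUnit A.det := by
    refine isUnit_iff_ne_zero.2 fun h0 => ?_
    have := det_ofRealUnitsConj P A
    rw [h, det_diagonal, h0, Complex.ofReal_zero] at this
    exact Finset.prod_ne_zero_iff.2 (fun i _ => Complex.ofReal_ne_zero.2 (hd i)) this
  rw [map_nonsing_inv_of_isUnit_det (ofRealUnitsConj P) hA]
  refine inv_eq_right_inv ?_
  rw [h, diagonal_mul_diagonal, ← diagonal_one]
  congr 1
  ext i
  exact mul_inv_cancel₀ (Complex.ofReal_ne_zero.2 (hd i))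

end Matrix

lemma condNum_le_of_spectrum_subset_Icc {k : Type*} [Fintype k] [DecidableEq k]
    {A : Matrix k k ℝ} {B : ℝ} (hne : (spectrum ℝ A).Nonempty)
    (h : spectrum ℝ A ⊆ Icc 1 B) : condNum A ≤ B := by
  obtain ⟨x, hx⟩ := hne
  have hbdd : BddAbove (spectrum ℝ A) := bddAbove_Icc.mono h
  have hinf : 1 ≤ sInf (spectrum ℝ A) := le_csInf ⟨x, hx⟩ fun y hy => (h hy).1
  have hsup : 1 ≤ sSup (spectrum ℝ A) := (h hx).1.trans (le_csSup hbdd hx)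
  exact (div_le_self (by linarith) hinf).trans (csSup_le ⟨x, hx⟩ fun y hy => (h hy).2)

lemma exists_sign_change_of_affine {c d : ℝ} (h : ¬(0 < c ∧ c + d < 0)) :
    ∃ x₀ ∈ Icc (0 : ℝ) 1, (∀ x ∈ Ioo 0 x₀, c + d * x ≤ 0) ∧ ∀ x ∈ Ioo x₀ 1, 0 ≤ c + d * x := by
  rcases lt_or_ge 0 c with hc | hc
  · have hcd : 0 ≤ c + d := by linarith [not_and.1 h hc]
    exact ⟨0, by simp, fun x hx => by linarith [hx.1, hx.2],
      fun x hx => by nlinarith [hx.1, hx.2]⟩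
  rcases le_or_gt (c + d) 0 with hcd | hcd
  · exact ⟨1, by simp, fun x hx => by nlinarith [hx.1, hx.2], fun x hx => by linarith [hx.1, hx.2]⟩
  · have hd : 0 < d := by linarith
    refine ⟨-c / d, ⟨div_nonneg (by linarith) hd.le, (div_le_one hd).2 (by linarith)⟩,
      fun x hx => ?_, fun x hx => ?_⟩
    · have := (lt_div_iff₀ hd).1 hx.2; linarith
    · have := (div_lt_iff₀ hd).1 hx.1; linarith

lemma le_max_of_hasDerivAt_of_sign_change {f f' : ℝ → ℝ} {a b x₀ : ℝ} (hx₀ : x₀ ∈ Icc a b)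
    (hf : ∀ x ∈ Icc a b, HasDerivAt f (f' x) x)
    (hneg : ∀ x ∈ Ioo a x₀, f' x ≤ 0) (hpos : ∀ x ∈ Ioo x₀ b, 0 ≤ f' x) {x : ℝ}
    (hx : x ∈ Icc a b) : f x ≤ max (f a) (f b) := by
  have hcont : ∀ u v, a ≤ u → v ≤ b → ContinuousOn f (Icc u v) := fun u v hu hv y hy =>
    (hf y ⟨hu.trans hy.1, hy.2.trans hv⟩).continuousAt.continuousWithinAt
  have hderiv : ∀ u v, a ≤ u → v ≤ b → ∀ y ∈ interior (Icc u v),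
      HasDerivWithinAt f (f' y) (interior (Icc u v)) y := fun u v hu hv y hy => by
    rw [interior_Icc] at hy
    exact (hf y ⟨hu.trans hy.1.le, hy.2.le.trans hv⟩).hasDerivWithinAt
  rcases le_total x x₀ with hxx | hxx
  · have := antitoneOn_of_hasDerivWithinAt_nonpos (convex_Icc a x₀) (hcont _ _ le_rfl hx₀.2)
      (hderiv _ _ le_rfl hx₀.2) (by simpa only [interior_Icc] using hneg)
    exact (this ⟨le_rfl, hx.1.trans hxx⟩ ⟨hx.1, hxx⟩ hx.1).trans (le_max_left _ _)
  · have := monotoneOn_of_hasDerivWithinAt_nonneg (convex_Icc x₀ b) (hcont _ _ hx₀.1 le_rfl)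
      (hderiv _ _ hx₀.1 le_rfl) (by simpa only [interior_Icc] using hpos)
    exact (this ⟨hxx, hx.2⟩ ⟨hxx.trans hx.2, le_rfl⟩ hx.2).trans (le_max_right _ _)

lemma pow_div_pow_le_max {a b : ℝ} (ha : 0 ≤ a) (hb : 0 ≤ b) {M N : ℕ}
    (h : ¬(0 < a * M - b * N ∧ a * M - b * N + a * b * ((M : ℝ) - N) < 0)) {x : ℝ}
    (hx : x ∈ Icc (0 : ℝ) 1) :
    (1 + a * x) ^ M / (1 + b * x) ^ N ≤ max ((1 + a) ^ M / (1 + b) ^ N) 1 := by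
  set H : ℝ → ℝ := fun y => M * Real.log (1 + a * y) - N * Real.log (1 + b * y)
  have hpos : ∀ {c y : ℝ}, 0 ≤ c → 0 ≤ y → 0 < 1 + c * y := fun hc hy => by positivity
  have hexp : ∀ y, 0 ≤ y → Real.exp (H y) = (1 + a * y) ^ M / (1 + b * y) ^ N := fun y hy => by
    simp only [H, Real.exp_sub, Real.exp_nat_mul, Real.exp_log (hpos ha hy),
      Real.exp_log (hpos hb hy)]
  have hH : ∀ y ∈ Icc (0 : ℝ) 1, HasDerivAt H
      ((a * M - b * N + a * b * ((M : ℝ) - N) * y) / ((1 + a * y) * (1 + b * y))) y := by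
    intro y hy
    have hA := ((((hasDerivAt_id y).const_mul a).const_add 1).log (hpos ha hy.1).ne').const_mul
      (M : ℝ)
    have hB := ((((hasDerivAt_id y).const_mul b).const_add 1).log (hpos hb hy.1).ne').const_mul
      (N : ℝ)
    refine (hA.sub hB).congr_deriv ?_
    simp only [id, mul_one, mul_div_assoc']
    rw [div_sub_div _ _ (hpos ha hy.1).ne' (hpos hb hy.1).ne']
    ring
  obtain ⟨x₀, hx₀, hneg, hpos'⟩ := exists_sign_change_of_affine h
  have hHx : H x ≤ max (H 0) (H 1) :=
    le_max_of_hasDerivAt_of_sign_change hx₀ hH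
      (fun y hy => div_nonpos_of_nonpos_of_nonneg (hneg y hy)
        (mul_pos (hpos ha hy.1.le) (hpos hb hy.1.le)).le)
      (fun y hy => div_nonneg (hpos' y hy)
        (mul_pos (hpos ha (hx₀.1.trans hy.1.le)) (hpos hb (hx₀.1.trans hy.1.le))).le) hx
  rw [← hexp x hx.1, max_comm]
  calc Real.exp (H x) ≤ Real.exp (max (H 0) (H 1)) := Real.exp_le_exp.2 hHx
    _ = max (Real.exp (H 0)) (Real.exp (H 1)) := Real.exp_monotone.map_max
    _ = max 1 ((1 + a) ^ M / (1 + b) ^ N) := by rw [hexp 0 le_rfl, hexp 1 zero_le_one]; simp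

section Fourier

variable (m : ℕ)

noncomputable def fourierSinSq (i : ZMod m) : ℝ := Real.sin (Real.pi * i.val / m) ^ 2

lemma fourierSinSq_mem_Icc (i : ZMod m) : fourierSinSq m i ∈ Icc (0 : ℝ) 1 :=
  ⟨sq_nonneg _, Real.sin_sq_le_one _⟩

variable [NeZero m]

lemma sum_stdAddChar_mul (b : ZMod m) :
    ∑ x : ZMod m, ZMod.stdAddChar (x * b) = if b = 0 then (m : ℂ) else 0 := by
  rw [AddChar.sum_mulShift b (ZMod.isPrimitive_stdAddChar m), ZMod.card, Nat.cast_ite,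
    Nat.cast_zero]

lemma fourier_mul_inverse_fourier :
    (of fun p i : ZMod m => ZMod.stdAddChar (p * i)) *
      (of fun i q : ZMod m => ZMod.stdAddChar (-(i * q)) / m) = 1 := by
  ext p q
  have hm : (m : ℂ) ≠ 0 := NeZero.ne _
  simp only [mul_apply, of_apply, one_apply, mul_div_assoc', ← Finset.sum_div,
    ← AddChar.map_add_eq_mul]
  have : ∀ k : ZMod m, p * k + -(k * q) = k * (p - q) := fun k => by ring
  simp only [this, sum_stdAddChar_mul, sub_eq_zero]
  split_ifs <;> simp [hm]

noncomputable def fourierUnit : (Matrix (ZMod m) (ZMod m) ℂ)ˣ where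
  val := of fun p i => ZMod.stdAddChar (p * i)
  inv := of fun i q => ZMod.stdAddChar (-(i * q)) / m
  val_inv := fourier_mul_inverse_fourier m
  inv_val := mul_eq_one_comm.1 (fourier_mul_inverse_fourier m)

lemma stdAddChar_add_stdAddChar_neg (i : ZMod m) :
    ZMod.stdAddChar i + ZMod.stdAddChar (-i) = 2 - 4 * (fourierSinSq m i : ℂ) := by
  set y : ℂ := Real.pi * i.val / m
  have hχ : ZMod.stdAddChar i = Complex.exp (2 * y * Complex.I) := by
    rw [ZMod.stdAddChar_apply, ZMod.toCircle_apply]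
    congr 1
    ring
  rw [AddChar.map_neg_eq_inv, hχ, ← Complex.exp_neg, ← neg_mul, ← Complex.two_cos,
    Complex.cos_two_mul, Complex.cos_sq']
  simp only [fourierSinSq, y]
  push_cast
  ring

lemma lap_map_mulVec (h : ℝ) (v : ZMod m → ℂ) (p : ZMod m) :
    ((lap m h).map Complex.ofReal *ᵥ v) p = (v (p - 1) + v (p + 1) - 2 * v p) / h ^ 2 := by
  have hprev : ∀ k : ZMod m, p = k + 1 ↔ k = p - 1 := fun k => by
    rw [eq_sub_iff_add_eq, eq_comm]
  simp only [mulVec, dotProduct, map_apply, lap, of_apply, hprev, Complex.ofReal_div,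
    Complex.ofReal_add, Complex.ofReal_pow, apply_ite Complex.ofReal, Complex.ofReal_neg,
    Complex.ofReal_one, Complex.ofReal_ofNat, Complex.ofReal_zero, div_mul_eq_mul_div,
    ← Finset.sum_div, add_mul, ite_mul, zero_mul, one_mul, Finset.sum_add_distrib,
    Finset.sum_ite_eq, Finset.sum_ite_eq', Finset.mem_univ, if_true]
  ring

lemma lap_map_mul_fourierUnit (h : ℝ) :
    (lap m h).map Complex.ofReal * fourierUnit m =
      fourierUnit m * diagonal fun i => ((-4 * fourierSinSq m i / h ^ 2 : ℝ) : ℂ) := by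
  ext p i
  have hcol := lap_map_mulVec m h (fun k => ZMod.stdAddChar (k * i)) p
  simp only [mulVec, dotProduct] at hcol
  rw [show (p - 1) * i = p * i + -i by ring, show (p + 1) * i = p * i + i by ring,
    AddChar.map_add_eq_mul, AddChar.map_add_eq_mul] at hcol
  rw [mul_apply, mul_diagonal]
  simp only [fourierUnit, of_apply, hcol]
  push_cast
  linear_combination ZMod.stdAddChar (p * i) / (h : ℂ) ^ 2 * stdAddChar_add_stdAddChar_neg m i

lemma ofRealUnitsConj_fourierUnit_lap (h : ℝ) :
    ofRealUnitsConj (fourierUnit m) (lap m h) =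
      diagonal fun i => ((-4 * fourierSinSq m i / h ^ 2 : ℝ) : ℂ) :=
  ofRealUnitsConj_eq_of_mul_eq _ (lap_map_mul_fourierUnit m h)

lemma ofRealUnitsConj_fourierUnit_diffCov (σ ν L h : ℝ) (M : ℕ) :
    ofRealUnitsConj (fourierUnit m) (diffCov m σ ν L h M) =
      diagonal fun i =>
        ((σ ^ 2 * ν * L / h / (1 + 4 * (L / h) ^ 2 * fourierSinSq m i) ^ M : ℝ) : ℂ) := by
  have hpos : ∀ i, 0 < 1 + 4 * (L / h) ^ 2 * fourierSinSq m i := fun i => by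
    have hs := (fourierSinSq_mem_Icc m i).1
    positivity
  have hpow : ofRealUnitsConj (fourierUnit m) ((1 - L ^ 2 • lap m h) ^ M) =
      diagonal fun i => (((1 + 4 * (L / h) ^ 2 * fourierSinSq m i) ^ M : ℝ) : ℂ) := by
    rw [map_pow, map_sub, map_one, map_smul, ofRealUnitsConj_fourierUnit_lap, ← diagonal_one,
      ← diagonal_smul, diagonal_sub, diagonal_pow]
    congr 1
    ext i
    simp only [Pi.pow_apply, Pi.smul_apply, Complex.real_smul]
    push_cast
    ring
  rw [diffCov, map_smul,
    ofRealUnitsConj_inv_of_eq_diagonal _ (fun i => (pow_pos (hpos i) M).ne') hpow, ← diagonal_smul]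
  congr 1
  ext i
  simp only [Pi.smul_apply, Complex.real_smul]
  push_cast
  ring

lemma ofRealUnitsConj_fourierUnit_one_add_inv_mul_diffCov {σb νb Lb σo νo Lo h : ℝ}
    (hσo : σo ≠ 0) (hνo : νo ≠ 0) (hLo : Lo ≠ 0) (hh : h ≠ 0) (Mb Mo : ℕ) :
    ofRealUnitsConj (fourierUnit m)
        (1 + (diffCov m σo νo Lo h Mo)⁻¹ * diffCov m σb νb Lb h Mb) =
      diagonal fun i => ((1 + σb ^ 2 * νb * (Lb / h) / (σo ^ 2 * νo * (Lo / h)) *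
        ((1 + 4 * (Lo / h) ^ 2 * fourierSinSq m i) ^ Mo /
          (1 + 4 * (Lb / h) ^ 2 * fourierSinSq m i) ^ Mb) : ℝ) : ℂ) := by
  have hpos : ∀ L i, 0 < 1 + 4 * (L / h) ^ 2 * fourierSinSq m i := fun L i => by
    have hs := (fourierSinSq_mem_Icc m i).1
    positivity
  rw [map_add, map_one, map_mul, ofRealUnitsConj_inv_of_eq_diagonal _
      (fun i => by have := hpos Lo i; positivity) (ofRealUnitsConj_fourierUnit_diffCov m ..),
    ofRealUnitsConj_fourierUnit_diffCov, diagonal_mul_diagonal, ← diagonal_one, diagonal_add]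
  congr 1
  ext i
  have := (hpos Lo i).ne'
  have := (hpos Lb i).ne'
  push_cast
  field_simp

end Fourier

theorem stmt12_general (m : ℕ) [NeZero m]
    (σb νb Lb σo νo Lo ho : ℝ)
    (hνb : 0 < νb) (hLb : 0 < Lb)
    (hσo : 0 < σo) (hνo : 0 < νo) (hLo : 0 < Lo) (hho : 0 < ho)
    (Mb Mo : ℕ)
    (Bo R So : Matrix (ZMod m) (ZMod m) ℝ)
    (hBo : Bo = diffCov m σb νb Lb ho Mb) (hR : R = diffCov m σo νo Lo ho Mo)
    (hSo : So = 1 + R⁻¹ * Bo)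
    (hNot : ¬((Lo / ho) ^ 2 * Mo > (Lb / ho) ^ 2 * Mb ∧ Mo < Mb ∧
        (Lb / ho) ^ 2 * Mb - (Lo / ho) ^ 2 * Mo >
          4 * (Lb / ho) ^ 2 * (Lo / ho) ^ 2 * ((Mo : ℝ) - (Mb : ℝ)))) :
    condNum So ≤ 1 + (σb ^ 2 * νb * (Lb / ho) / (σo ^ 2 * νo * (Lo / ho))) *
      max ((1 + 4 * (Lo / ho) ^ 2) ^ Mo / (1 + 4 * (Lb / ho) ^ 2) ^ Mb) 1 := by
  subst hSo hR hBo
  set α := σb ^ 2 * νb * (Lb / ho) / (σo ^ 2 * νo * (Lo / ho))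
  have hcond : ¬(0 < 4 * (Lo / ho) ^ 2 * Mo - 4 * (Lb / ho) ^ 2 * Mb ∧
      4 * (Lo / ho) ^ 2 * Mo - 4 * (Lb / ho) ^ 2 * Mb +
        4 * (Lo / ho) ^ 2 * (4 * (Lb / ho) ^ 2) * ((Mo : ℝ) - Mb) < 0) := by
    rintro ⟨h1, h2⟩
    have hM : (Mo : ℝ) - Mb < 0 :=
      neg_of_mul_neg_right (a := 4 * (Lo / ho) ^ 2 * (4 * (Lb / ho) ^ 2)) (by linarith)
        (by positivity)
    exact hNot ⟨by linarith, by exact_mod_cast sub_neg.1 hM, by linarith⟩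
  refine condNum_le_of_spectrum_subset_Icc ?_ ?_ <;>
    rw [spectrum_eq_range_of_ofRealUnitsConj_eq_diagonal _
      (ofRealUnitsConj_fourierUnit_one_add_inv_mul_diffCov m hσo.ne' hνo.ne' hLo.ne' hho.ne' ..)]
  · exact range_nonempty _
  · rintro _ ⟨i, rfl⟩
    have hs := (fourierSinSq_mem_Icc m i).1
    have hα : 0 ≤ α := by positivity
    have hg := pow_div_pow_le_max (by positivity) (by positivity) hcond (fourierSinSq_mem_Icc m i)
    exact ⟨le_add_of_nonneg_right (by positivity),
      add_le_add_right (mul_le_mul_of_nonneg_left hg hα) 1⟩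

/-- For `S_o = I + R⁻¹ B_o` with circulant diffusion covariances as
before, if conditions (i) `L̃_o²M_o > L̃_{b/o}²M_b`, (ii) `M_o < M_b`,
(iii) `L̃_{b/o}²M_b - L̃_o²M_o > 4L̃_{b/o}²L̃_o²(M_o - M_b)` do NOT all hold, then
`κ(S_o) ≤ 1 + α · max{(1+4L̃_o²)^{M_o}/(1+4L̃_{b/o}²)^{M_b}, 1}`. -/
theorem stmt12 (m : ℕ) [NeZero m]
    (σb νb Lb σo νo Lo ho : ℝ)
    (hσb : 0 < σb) (hνb : 0 < νb) (hLb : 0 < Lb)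
    (hσo : 0 < σo) (hνo : 0 < νo) (hLo : 0 < Lo) (hho : 0 < ho)
    (Mb Mo : ℕ) (hMb : 0 < Mb) (hMo : 0 < Mo)
    (Bo R So : Matrix (ZMod m) (ZMod m) ℝ)
    (hBo : Bo = diffCov m σb νb Lb ho Mb) (hR : R = diffCov m σo νo Lo ho Mo)
    (hSo : So = 1 + R⁻¹ * Bo)
    (hNot : ¬((Lo / ho) ^ 2 * Mo > (Lb / ho) ^ 2 * Mb ∧ Mo < Mb ∧
        (Lb / ho) ^ 2 * Mb - (Lo / ho) ^ 2 * Mo >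
          4 * (Lb / ho) ^ 2 * (Lo / ho) ^ 2 * ((Mo : ℝ) - (Mb : ℝ)))) :
    condNum So ≤ 1 + (σb ^ 2 * νb * (Lb / ho) / (σo ^ 2 * νo * (Lo / ho))) *
      max ((1 + 4 * (Lo / ho) ^ 2) ^ Mo / (1 + 4 * (Lb / ho) ^ 2) ^ Mb) 1 :=
  stmt12_general m σb νb Lb σo νo Lo ho hνb hLb hσo hνo hLo hho Mb Mo Bo R So hBo hR hSo hNot
end

section
/- Fix L_b > 0, h_o > 0 and positive integers M_o < M_b. Assume that whenever condition (i) L̃_o²M_o > L̃_{b/o}²M_b holds, condition (iii) L̃_{b/o}²M_b − L̃_o²M_o > 4L̃_{b/o}²L̃_o²(M_o − M_b) also holds. Then the bound η of Theorem th_diffusion_bound, viewed as a function of L_o, has a unique minimum, attained at the L_o satisfying L_o√(2M_o − 1) = L_b√(2M_b − 1), i.e., when the Stein length-scales ρ_o = L_o√(2M_o−1) and ρ_b = L_b√(2M_b−1) are equal. -/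
/-!
On the branch where condition (i) holds (and hence, by hypothesis, (iii)), `η - 1` is a positive
multiple of `φ(L) = L^(2M_b-1) / (L² - L_b²)^(M_b-M_o)`, the powers of `h_o` cancelling. The
logarithmic derivative of `φ` has the sign of `(2M_o-1)L² - (2M_b-1)L_b²`, so `φ` strictly
decreases up to the point `x₀` of equal Stein length-scales and strictly increases after it.
On the other branch `η ≥ 1 + c/L ≥ 1 + c/x_b`, where `x_b = L_b √(M_b/M_o)` is the boundary of
condition (i); there the first-branch formula also equals `1 + c/x_b`, and `x_b < x₀`.
-/

open Classical in
/-- The two-branch condition-number bound `η` of Theorem `th_diffusion_bound`,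
viewed as a function of `L_o`, with `L̃_o = L_o/h_o`, `L̃_{b/o} = L_b/h_o` and
`α(L_o) = c/L_o` where `c > 0` collects the fixed constants `σ_b²ν_b L_b/(σ_o²ν_o)`. -/
noncomputable def eta (c Lb ho : ℝ) (Mb Mo : ℕ) (Lo : ℝ) : ℝ :=
  if (Lo / ho) ^ 2 * Mo > (Lb / ho) ^ 2 * Mb ∧ Mo < Mb ∧
      (Lb / ho) ^ 2 * Mb - (Lo / ho) ^ 2 * Mo >
        4 * (Lb / ho) ^ 2 * (Lo / ho) ^ 2 * ((Mo : ℝ) - (Mb : ℝ)) then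
    1 + (c / Lo) * ((Lo / ho) ^ 2 / Mb) ^ Mb * ((Mo : ℝ) / (Lb / ho) ^ 2) ^ Mo *
      (((Mb : ℝ) - (Mo : ℝ)) / ((Lo / ho) ^ 2 - (Lb / ho) ^ 2)) ^ (Mb - Mo)
  else
    1 + (c / Lo) * max ((1 + 4 * (Lo / ho) ^ 2) ^ Mo / (1 + 4 * (Lb / ho) ^ 2) ^ Mb) 1

open Real Set

lemma mul_sq_eq_of_mul_sqrt_eq {x a A B : ℝ} (hA : 0 ≤ A) (hB : 0 ≤ B) (h : x * √A = a * √B) :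
    A * x ^ 2 = B * a ^ 2 := by
  have := congrArg (· ^ 2) h
  simp only [mul_pow, sq_sqrt hA, sq_sqrt hB] at this
  linarith

lemma lt_of_sq_mul_lt_sq_mul {a x m n : ℝ} (hx : 0 ≤ x) (hn : 0 < n) (hnm : n ≤ m)
    (h : a ^ 2 * m < x ^ 2 * n) : a < x :=
  lt_of_pow_lt_pow_left₀ 2 hx (lt_of_mul_lt_mul_right
    ((mul_le_mul_of_nonneg_left hnm (sq_nonneg a)).trans_lt h) hn.le)

section PowDivSqSubSqPow

variable {a x₀ : ℝ} {p q : ℕ}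

lemma hasDerivAt_mul_log_sub_mul_log_sq_sub_sq (α β : ℝ) (ha : 0 ≤ a) {x : ℝ} (hx : a < x) :
    HasDerivAt (fun x => α * log x - β * log (x ^ 2 - a ^ 2))
      (((α - 2 * β) * x ^ 2 - α * a ^ 2) / (x * (x ^ 2 - a ^ 2))) x := by
  have hx0 : 0 < x := ha.trans_lt hx
  have hd : x ^ 2 - a ^ 2 ≠ 0 := by nlinarith
  refine (((hasDerivAt_log hx0.ne').const_mul α).sub
    ((((hasDerivAt_pow 2 x).sub_const (a ^ 2)).log hd).const_mul β)).congr_deriv ?_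
  field_simp
  ring

lemma continuousOn_mul_log_sub_mul_log_sq_sub_sq (α β : ℝ) (ha : 0 ≤ a) {s : Set ℝ}
    (hs : s ⊆ Ioi a) :
    ContinuousOn (fun x => α * log x - β * log (x ^ 2 - a ^ 2)) s := fun _ hx =>
  (hasDerivAt_mul_log_sub_mul_log_sq_sub_sq α β ha (hs hx)).continuousAt.continuousWithinAt

lemma strictAntiOn_mul_log_sub_mul_log_sq_sub_sq (ha : 0 ≤ a) (hpq : 2 * q < p)
    (hx₀ : ((p : ℝ) - 2 * q) * x₀ ^ 2 = p * a ^ 2) :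
    StrictAntiOn (fun x => p * log x - q * log (x ^ 2 - a ^ 2)) (Ioc a x₀) := by
  have hpq' : (0 : ℝ) < p - 2 * q := by rw [sub_pos]; exact_mod_cast hpq
  refine strictAntiOn_of_deriv_neg (convex_Ioc a x₀)
    (continuousOn_mul_log_sub_mul_log_sq_sub_sq _ _ ha Ioc_subset_Ioi_self) fun x hx => ?_
  rw [interior_Ioc] at hx
  have hx0 : 0 < x := ha.trans_lt hx.1
  have hxx₀ : x ^ 2 < x₀ ^ 2 := by nlinarith [hx.2]
  rw [(hasDerivAt_mul_log_sub_mul_log_sq_sub_sq _ _ ha hx.1).deriv]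
  refine div_neg_of_neg_of_pos ?_ (mul_pos hx0 (by nlinarith [hx.1]))
  nlinarith [mul_lt_mul_of_pos_left hxx₀ hpq']

lemma strictMonoOn_mul_log_sub_mul_log_sq_sub_sq (ha : 0 ≤ a) (hpq : 2 * q < p)
    (hx₀ : ((p : ℝ) - 2 * q) * x₀ ^ 2 = p * a ^ 2) (hax₀ : a < x₀) :
    StrictMonoOn (fun x => p * log x - q * log (x ^ 2 - a ^ 2)) (Ici x₀) := by
  have hpq' : (0 : ℝ) < p - 2 * q := by rw [sub_pos]; exact_mod_cast hpq
  refine strictMonoOn_of_deriv_pos (convex_Ici x₀)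
    (continuousOn_mul_log_sub_mul_log_sq_sub_sq _ _ ha fun x hx => hax₀.trans_le hx)
    fun x hx => ?_
  rw [interior_Ici] at hx
  have hax : a < x := hax₀.trans hx
  have hx0 : 0 < x := ha.trans_lt hax
  have hxx₀ : x₀ ^ 2 < x ^ 2 := by nlinarith [mem_Ioi.mp hx]
  rw [(hasDerivAt_mul_log_sub_mul_log_sq_sub_sq _ _ ha hax).deriv]
  refine div_pos ?_ (mul_pos hx0 (by nlinarith))
  nlinarith [mul_lt_mul_of_pos_left hxx₀ hpq']

lemma pow_div_sq_sub_sq_pow_lt_of_ne (ha : 0 ≤ a) (hpq : 2 * q < p)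
    (hx₀ : ((p : ℝ) - 2 * q) * x₀ ^ 2 = p * a ^ 2) (hax₀ : a < x₀) {y : ℝ} (hay : a < y)
    (hne : y ≠ x₀) :
    x₀ ^ p / (x₀ ^ 2 - a ^ 2) ^ q < y ^ p / (y ^ 2 - a ^ 2) ^ q := by
  have log_eq {x : ℝ} (hx : a < x) :
      log (x ^ p / (x ^ 2 - a ^ 2) ^ q) = p * log x - q * log (x ^ 2 - a ^ 2) := by
    have hx0 : 0 < x := ha.trans_lt hx
    rw [log_div (by positivity) (pow_ne_zero _ (by nlinarith)), log_pow, log_pow]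
  have pos {x : ℝ} (hx : a < x) : 0 < x ^ p / (x ^ 2 - a ^ 2) ^ q := by
    have hx0 : 0 < x := ha.trans_lt hx
    have : 0 < x ^ 2 - a ^ 2 := by nlinarith
    positivity
  rw [← log_lt_log_iff (pos hax₀) (pos hay), log_eq hax₀, log_eq hay]
  rcases hne.lt_or_gt with hlt | hgt
  · exact strictAntiOn_mul_log_sub_mul_log_sq_sub_sq ha hpq hx₀ ⟨hay, hlt.le⟩
      ⟨hax₀, le_rfl⟩ hlt
  · exact strictMonoOn_mul_log_sub_mul_log_sq_sub_sq ha hpq hx₀ hax₀ self_mem_Ici hgt.le hgt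

end PowDivSqSubSqPow

noncomputable def etaBranchOne (c Lb ho : ℝ) (Mb Mo : ℕ) (Lo : ℝ) : ℝ :=
  (c / Lo) * ((Lo / ho) ^ 2 / Mb) ^ Mb * ((Mo : ℝ) / (Lb / ho) ^ 2) ^ Mo *
    (((Mb : ℝ) - (Mo : ℝ)) / ((Lo / ho) ^ 2 - (Lb / ho) ^ 2)) ^ (Mb - Mo)

lemma etaBranchOne_eq {c Lb ho Lo : ℝ} {Mb Mo : ℕ} (hho : ho ≠ 0)
    (hLo : Lo ≠ 0) (hMb : 0 < Mb) (hMoMb : Mo ≤ Mb) :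
    etaBranchOne c Lb ho Mb Mo Lo =
      c * (((Mo : ℝ) / Lb ^ 2) ^ Mo * ((Mb : ℝ) - Mo) ^ (Mb - Mo) / (Mb : ℝ) ^ Mb) *
        (Lo ^ (2 * Mb - 1) / (Lo ^ 2 - Lb ^ 2) ^ (Mb - Mo)) := by
  obtain ⟨k, rfl⟩ := Nat.exists_eq_add_of_le hMoMb
  have hpow : Lo ^ (2 * (Mo + k) - 1) = (Lo ^ 2) ^ (Mo + k) / Lo := by
    rw [eq_div_iff hLo, ← pow_mul, ← pow_succ]
    congr 1
    omega
  have hsq : (Lo / ho) ^ 2 - (Lb / ho) ^ 2 = (Lo ^ 2 - Lb ^ 2) / ho ^ 2 := by ring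
  have hMb' : ((Mo + k : ℕ) : ℝ) ≠ 0 := by positivity
  rw [etaBranchOne, hpow, hsq, Nat.add_sub_cancel_left]
  simp only [div_pow, Nat.cast_add, add_sub_cancel_left, pow_add] at hMb' ⊢
  field_simp

lemma etaBranchOne_of_sq_mul_eq {c Lb ho xb : ℝ} {Mb Mo : ℕ} (hho : ho ≠ 0) (hLb : Lb ≠ 0)
    (hMo : 0 < Mo) (hMoMb : Mo < Mb) (hxb : xb ^ 2 * Mo = Lb ^ 2 * Mb) :
    etaBranchOne c Lb ho Mb Mo xb = c / xb := by
  have hMo' : (Mo : ℝ) ≠ 0 := by positivity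
  have hMb' : (Mb : ℝ) ≠ 0 := Nat.cast_ne_zero.mpr (by omega)
  have hMbMo : (Mb : ℝ) - Mo ≠ 0 := sub_ne_zero.mpr (by exact_mod_cast hMoMb.ne')
  set t := (Lb / ho) ^ 2 / Mo
  have ht0 : t ≠ 0 := div_ne_zero (pow_ne_zero _ (div_ne_zero hLb hho)) hMo'
  have hu : (xb / ho) ^ 2 = t * Mb := by
    simp only [t, div_pow]; field_simp; linear_combination hxb
  have hv : (Lb / ho) ^ 2 = t * Mo := (div_mul_cancel₀ _ hMo').symm
  have hcancel : t ^ Mb * (t⁻¹) ^ Mo * (t⁻¹) ^ (Mb - Mo) = 1 := by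
    rw [mul_assoc, ← pow_add, Nat.add_sub_cancel' hMoMb.le, ← mul_pow, mul_inv_cancel₀ ht0,
      one_pow]
  rw [etaBranchOne, hu, hv, ← mul_sub, mul_div_cancel_right₀ _ hMb', div_mul_cancel_right₀ hMo',
    div_mul_cancel_right₀ hMbMo, mul_assoc, mul_assoc, ← mul_assoc (t ^ Mb), hcancel, mul_one]

section Eta

variable {c Lb ho x₀ : ℝ} {Mb Mo : ℕ}

lemma div_sq_mul_lt_div_sq_mul_iff {a b h m n : ℝ} (hh : h ≠ 0) :
    (a / h) ^ 2 * m < (b / h) ^ 2 * n ↔ a ^ 2 * m < b ^ 2 * n := by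
  simp only [div_pow, div_mul_eq_mul_div]
  exact div_lt_div_iff_of_pos_right (by positivity)

lemma eta_eq_one_add_etaBranchOne {Lo : ℝ} (hMoMb : Mo < Mb)
    (hi : (Lo / ho) ^ 2 * Mo > (Lb / ho) ^ 2 * Mb)
    (hiii : (Lb / ho) ^ 2 * Mb - (Lo / ho) ^ 2 * Mo >
      4 * (Lb / ho) ^ 2 * (Lo / ho) ^ 2 * ((Mo : ℝ) - (Mb : ℝ))) :
    eta c Lb ho Mb Mo Lo = 1 + etaBranchOne c Lb ho Mb Mo Lo := by
  rw [eta, if_pos ⟨hi, hMoMb, hiii⟩, etaBranchOne]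

lemma one_add_div_le_eta {Lo : ℝ} (hc : 0 < c) (hLo : 0 < Lo)
    (hi : ¬(Lo / ho) ^ 2 * Mo > (Lb / ho) ^ 2 * Mb) :
    1 + c / Lo ≤ eta c Lb ho Mb Mo Lo := by
  rw [eta, if_neg fun h => hi h.1]
  gcongr
  exact le_mul_of_one_le_right (by positivity) (le_max_right _ _)

lemma etaBranchOne_lt_of_ne (hc : 0 < c) (hLb : 0 < Lb) (hho : ho ≠ 0) (hMo : 0 < Mo)
    (hMoMb : Mo < Mb) (hx₀ : (2 * Mo - 1 : ℝ) * x₀ ^ 2 = (2 * Mb - 1) * Lb ^ 2)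
    (hLbx₀ : Lb < x₀) {y : ℝ} (hLby : Lb < y) (hne : y ≠ x₀) :
    etaBranchOne c Lb ho Mb Mo x₀ < etaBranchOne c Lb ho Mb Mo y := by
  have hMo' : (0 : ℝ) < Mo := by exact_mod_cast hMo
  have hMoMb' : (Mo : ℝ) < Mb := by exact_mod_cast hMoMb
  have hMbMo : (0 : ℝ) < Mb - Mo := sub_pos.mpr hMoMb'
  have hp : ((2 * Mb - 1 : ℕ) : ℝ) = 2 * Mb - 1 := by
    rw [Nat.cast_sub (by omega)]; push_cast; ring
  have hq : ((Mb - Mo : ℕ) : ℝ) = Mb - Mo := Nat.cast_sub hMoMb.le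
  have hφ := pow_div_sq_sub_sq_pow_lt_of_ne (p := 2 * Mb - 1) (q := Mb - Mo) hLb.le (by omega)
    (by rw [hp, hq]; linear_combination hx₀) hLbx₀ hLby hne
  rw [etaBranchOne_eq hho (hLb.trans hLbx₀).ne' (by omega) hMoMb.le,
    etaBranchOne_eq hho (hLb.trans hLby).ne' (by omega) hMoMb.le]
  have hK : 0 < ((Mo : ℝ) / Lb ^ 2) ^ Mo * ((Mb : ℝ) - Mo) ^ (Mb - Mo) / (Mb : ℝ) ^ Mb :=
    div_pos (mul_pos (pow_pos (div_pos hMo' (pow_pos hLb 2)) _) (pow_pos hMbMo _))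
      (pow_pos (hMo'.trans hMoMb') _)
  exact mul_lt_mul_of_pos_left hφ (mul_pos hc hK)

lemma etaBranchOne_lt_div_of_sq_mul_le (hc : 0 < c) (hLb : 0 < Lb) (hho : ho ≠ 0)
    (hMo : 0 < Mo) (hMoMb : Mo < Mb) (hx₀ : (2 * Mo - 1 : ℝ) * x₀ ^ 2 = (2 * Mb - 1) * Lb ^ 2)
    (hx₀i : Lb ^ 2 * Mb < x₀ ^ 2 * Mo) (hLbx₀ : Lb < x₀) {y : ℝ} (hy : 0 < y)
    (hyi : y ^ 2 * Mo ≤ Lb ^ 2 * Mb) :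
    etaBranchOne c Lb ho Mb Mo x₀ < c / y := by
  have hMo' : (0 : ℝ) < Mo := by exact_mod_cast hMo
  have hMoMb' : (Mo : ℝ) < Mb := by exact_mod_cast hMoMb
  set xb := √(Lb ^ 2 * Mb / Mo)
  have hxb0 : 0 < xb := sqrt_pos.mpr (div_pos (mul_pos (pow_pos hLb 2) (hMo'.trans hMoMb')) hMo')
  have hxb : xb ^ 2 * Mo = Lb ^ 2 * Mb := by
    rw [sq_sqrt (by positivity), div_mul_cancel₀ _ hMo'.ne']
  have hLbxb : Lb < xb := lt_of_pow_lt_pow_left₀ 2 hxb0.le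
    (lt_of_mul_lt_mul_right (hxb ▸ mul_lt_mul_of_pos_left hMoMb' (pow_pos hLb 2)) hMo'.le)
  have hxbx₀ : xb < x₀ := lt_of_sq_mul_lt_sq_mul (hLb.trans hLbx₀).le hMo' le_rfl (hxb ▸ hx₀i)
  have hyxb : y ≤ xb := le_of_pow_le_pow_left₀ two_ne_zero hxb0.le (by nlinarith)
  calc etaBranchOne c Lb ho Mb Mo x₀ < etaBranchOne c Lb ho Mb Mo xb :=
        etaBranchOne_lt_of_ne hc hLb hho hMo hMoMb hx₀ hLbx₀ hLbxb hxbx₀.ne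
    _ = c / xb := etaBranchOne_of_sq_mul_eq hho hLb.ne' hMo hMoMb hxb
    _ ≤ c / y := by gcongr

end Eta

/-- For fixed `L_b, h_o > 0` and orders `M_o < M_b`, assuming that
condition (iii) holds whenever condition (i) does, the bound `η` as a function of
`L_o > 0` has a unique minimum, attained at the `L_o` with equal Stein
length-scales: `L_o √(2M_o-1) = L_b √(2M_b-1)`. -/
theorem stmt14 (c Lb ho : ℝ) (hc : 0 < c) (hLb : 0 < Lb) (hho : 0 < ho)
    (Mo Mb : ℕ) (hMo : 0 < Mo) (hMoMb : Mo < Mb)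
    (hImp : ∀ Lo : ℝ, 0 < Lo →
      (Lo / ho) ^ 2 * Mo > (Lb / ho) ^ 2 * Mb →
      (Lb / ho) ^ 2 * Mb - (Lo / ho) ^ 2 * Mo >
        4 * (Lb / ho) ^ 2 * (Lo / ho) ^ 2 * ((Mo : ℝ) - (Mb : ℝ))) :
    ∀ x₀ : ℝ, 0 < x₀ →
      x₀ * Real.sqrt (2 * Mo - 1) = Lb * Real.sqrt (2 * Mb - 1) →
      ∀ y : ℝ, 0 < y → y ≠ x₀ →
        eta c Lb ho Mb Mo x₀ < eta c Lb ho Mb Mo y := by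
  intro x₀ hx₀ hstein y hy hne
  have hMo1 : (1 : ℝ) ≤ Mo := by exact_mod_cast hMo
  have hMo' : (0 : ℝ) < Mo := by linarith
  have hMoMb' : (Mo : ℝ) < Mb := by exact_mod_cast hMoMb
  have hx₀sq : (2 * Mo - 1 : ℝ) * x₀ ^ 2 = (2 * Mb - 1) * Lb ^ 2 :=
    mul_sq_eq_of_mul_sqrt_eq (by linarith) (by linarith) hstein
  have hx₀i : Lb ^ 2 * Mb < x₀ ^ 2 * Mo := by
    nlinarith [mul_pos (pow_pos hLb 2) (sub_pos.mpr hMoMb')]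
  have hLbx₀ : Lb < x₀ := lt_of_sq_mul_lt_sq_mul hx₀.le hMo' hMoMb'.le hx₀i
  have hx₀i' := (div_sq_mul_lt_div_sq_mul_iff (m := (Mb : ℝ)) (n := Mo) hho.ne').mpr hx₀i
  rw [eta_eq_one_add_etaBranchOne hMoMb hx₀i' (hImp x₀ hx₀ hx₀i')]
  by_cases hyi : (y / ho) ^ 2 * Mo > (Lb / ho) ^ 2 * Mb
  · rw [eta_eq_one_add_etaBranchOne hMoMb hyi (hImp y hy hyi)]
    have hLby : Lb < y := lt_of_sq_mul_lt_sq_mul hy.le hMo' hMoMb'.le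
      ((div_sq_mul_lt_div_sq_mul_iff hho.ne').mp hyi)
    exact (add_lt_add_iff_left 1).mpr
      (etaBranchOne_lt_of_ne hc hLb hho.ne' hMo hMoMb hx₀sq hLbx₀ hLby hne)
  · have hyi' : y ^ 2 * Mo ≤ Lb ^ 2 * Mb :=
      not_lt.mp fun h => hyi ((div_sq_mul_lt_div_sq_mul_iff hho.ne').mpr h)
    calc 1 + etaBranchOne c Lb ho Mb Mo x₀ < 1 + c / y := (add_lt_add_iff_left 1).mpr
          (etaBranchOne_lt_div_of_sq_mul_le hc hLb hho.ne' hMo hMoMb hx₀sq hx₀i hLbx₀ hy hyi')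
      _ ≤ eta c Lb ho Mb Mo y := one_add_div_le_eta hc hy hyi
end

section
/- Suppose L̃_{b/o} ≥ L̃_min > 0 and M_o < M_b with M_o, M_b even positive integers. Then condition (iii), namely L̃_{b/o}²M_b − L̃_o²M_o > 4L̃_{b/o}²L̃_o²(M_o − M_b) for all admissible L̃_o, is implied by the single inequality M_b ≤ 2(1 + 4L̃_min²). -/
/-- If `L̃_{b/o} ≥ L̃_min > 0` and `M_o < M_b` are even positive
integers, then the single inequality `M_b ≤ 2(1 + 4L̃_min²)` implies condition
(iii) of Theorem `th_diffusion_bound`, namely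
`L̃_{b/o}² M_b - L̃_o² M_o > 4 L̃_{b/o}² L̃_o² (M_o - M_b)` for all `L̃_o > 0`. -/
theorem stmt15 (Lmin Lb : ℝ) (hLmin : 0 < Lmin) (hLbLmin : Lmin ≤ Lb)
    (Mo Mb : ℕ) (hMo : 0 < Mo) (hMoMb : Mo < Mb)
    (hMoEven : Even Mo) (hMbEven : Even Mb)
    (hMb : (Mb : ℝ) ≤ 2 * (1 + 4 * Lmin ^ 2)) :
    ∀ Lo : ℝ, 0 < Lo →
      Lb ^ 2 * Mb - Lo ^ 2 * Mo > 4 * Lb ^ 2 * Lo ^ 2 * ((Mo : ℝ) - (Mb : ℝ)) := by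
  intro Lo hLo
  obtain ⟨a, ha⟩ := hMoEven
  obtain ⟨b, hb⟩ := hMbEven
  have h2 : Mo + 2 ≤ Mb := by omega
  have h2' : (Mo : ℝ) + 2 ≤ (Mb : ℝ) := by exact_mod_cast h2
  have hLb : 0 < Lb := lt_of_lt_of_le hLmin hLbLmin
  have hsq : Lmin ^ 2 ≤ Lb ^ 2 := pow_le_pow_left₀ hLmin.le hLbLmin 2
  have key : Lmin ^ 2 * Lo ^ 2 ≤ Lb ^ 2 * Lo ^ 2 :=
    mul_le_mul_of_nonneg_right hsq (sq_nonneg Lo)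
  nlinarith [mul_pos (pow_pos hLb 2) (pow_pos hLo 2), pow_pos hLb 2,
    mul_pos (mul_pos (pow_pos hLb 2) (pow_pos hLo 2)) hLo,
    mul_le_mul_of_nonneg_left key (by positivity : (0:ℝ) ≤ 4),
    sq_nonneg Lo, hMo]
end

section
/- In the equal-order case M_o = M_b = M with fixed L̃_{b/o}, the unique minimizer of the bound η (as a function of L̃_o, under the second branch of Theorem th_diffusion_bound) is L̃_o = L̃_{b/o}; equivalently, in terms of Daley length-scales D = L√(2M−3) (for M > 1), the minimum is attained when D_o = D_b. -/
/-!
Up to `L_b` the maximum is `1` and the bound `1 + c/x` decreases; from `L_b` on it is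
`1 + c·g(x)/(1+4L_b²)^M` with `g(x) = (1+4x²)^M/x`, and
`g'(x) = (1+4x²)^(M-1)((8M-4)x² - 1)/x²` is positive exactly when `x√(2M-1) > 1/2`.
So both branches are minimal at `x = L_b`. The Daley length-scale form only cancels the
positive factor `√(2M-3)`.
-/

open Set

lemma hasDerivAt_one_add_four_mul_sq_pow_div {M : ℕ} (hM : 1 ≤ M) {x : ℝ} (hx : x ≠ 0) :
    HasDerivAt (fun x : ℝ => (1 + 4 * x ^ 2) ^ M / x)
      ((1 + 4 * x ^ 2) ^ (M - 1) * ((8 * M - 4) * x ^ 2 - 1) / x ^ 2) x := by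
  have hu : HasDerivAt (fun x : ℝ => 1 + 4 * x ^ 2) (8 * x) x := by
    refine (((hasDerivAt_pow 2 x).const_mul 4).const_add 1).congr_deriv ?_
    norm_num
    ring
  refine ((hu.pow M).div (hasDerivAt_id x) hx).congr_deriv ?_
  obtain ⟨m, rfl⟩ := Nat.exists_eq_add_of_le' hM
  simp only [Pi.pow_apply, id, add_tsub_cancel_right, pow_succ, Nat.cast_add, Nat.cast_one]
  field_simp
  ring

lemma strictMonoOn_one_add_four_mul_sq_pow_div {M : ℕ} {a : ℝ} (ha : 0 < a)
    (hMa : 1 ≤ (2 * M - 1) * (2 * a) ^ 2) :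
    StrictMonoOn (fun x : ℝ => (1 + 4 * x ^ 2) ^ M / x) (Ici a) := by
  have hM : 1 ≤ M := by
    by_contra! h
    simp only [Nat.lt_one_iff.mp h, Nat.cast_zero] at hMa
    nlinarith
  apply strictMonoOn_of_deriv_pos (convex_Ici a)
  · exact ContinuousOn.div (by fun_prop) continuousOn_id fun x hx => (ha.trans_le hx).ne'
  · intro x hx
    rw [interior_Ici, mem_Ioi] at hx
    have hx0 : 0 < x := ha.trans hx
    have hMr : (1 : ℝ) ≤ M := by exact_mod_cast hM
    rw [(hasDerivAt_one_add_four_mul_sq_pow_div hM hx0.ne').deriv]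
    have : 0 < (8 * M - 4) * x ^ 2 - 1 := by nlinarith [mul_pos (sub_pos.mpr hx) (add_pos hx0 ha)]
    positivity

lemma div_lt_div_mul_max_div_one {u : ℝ → ℝ} {b c y : ℝ}
    (hu : StrictMonoOn (fun x => u x / x) (Ici b)) (hub : 0 < u b)
    (hc : 0 < c) (hb : 0 < b) (hy : 0 < y) (hne : y ≠ b) :
    c / b < c / y * max (u y / u b) 1 := by
  rcases hne.lt_or_gt with hyb | hby
  · calc c / b < c / y := div_lt_div_of_pos_left hc hy hyb
      _ = c / y * 1 := (mul_one _).symm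
      _ ≤ c / y * max (u y / u b) 1 := by gcongr; exact le_max_right _ _
  · have hratio : u b / b < u y / y := hu self_mem_Ici hby.le hby
    calc c / b = c * (u b / b) / u b := by field_simp
      _ < c * (u y / y) / u b := by gcongr
      _ = c / y * (u y / u b) := by ring
      _ ≤ c / y * max (u y / u b) 1 := by gcongr; exact le_max_left _ _

lemma pos_of_half_lt_mul_sqrt {y t : ℝ} (h : 1 / 2 < y * √t) : 0 < y :=
  pos_of_mul_pos_left (by linarith) (Real.sqrt_nonneg t)

lemma one_lt_mul_two_mul_sq_of_half_lt_mul_sqrt {y t : ℝ} (h : 1 / 2 < y * √t) :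
    1 < t * (2 * y) ^ 2 := by
  have ht : 0 < t :=
    Real.sqrt_pos.mp (pos_of_mul_pos_right (by linarith) (pos_of_half_lt_mul_sqrt h).le)
  have hsq := mul_self_lt_mul_self (by norm_num) h
  nlinarith [Real.mul_self_sqrt ht.le]

theorem stmt16_general (c Lb : ℝ) (hc : 0 < c)
    (M : ℕ) (hM : 2 ≤ M)
    (hLbDom : 1 / 2 < Lb * Real.sqrt (2 * M - 1))
    (f : ℝ → ℝ)
    (hf : ∀ x : ℝ, f x =
      1 + (c / x) * max ((1 + 4 * x ^ 2) ^ M / (1 + 4 * Lb ^ 2) ^ M) 1) :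
    (∀ y : ℝ, 1 / 2 < y * Real.sqrt (2 * M - 1) → y ≠ Lb → f Lb < f y) ∧
    (∀ Lo : ℝ, 0 < Lo →
      (Lo * Real.sqrt (2 * M - 3) = Lb * Real.sqrt (2 * M - 3) ↔ Lo = Lb)) := by
  have hLb := pos_of_half_lt_mul_sqrt hLbDom
  have hmono := strictMonoOn_one_add_four_mul_sq_pow_div hLb
    (one_lt_mul_two_mul_sq_of_half_lt_mul_sqrt hLbDom).le
  refine ⟨fun y hy hne => ?_, fun Lo _ => ?_⟩
  · have hP : (0 : ℝ) < (1 + 4 * Lb ^ 2) ^ M := by positivity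
    have hmin := div_lt_div_mul_max_div_one hmono hP hc hLb (pos_of_half_lt_mul_sqrt hy) hne
    rw [hf, hf, div_self hP.ne', max_self, mul_one]
    linarith
  · have hMr : (2 : ℝ) ≤ M := by exact_mod_cast hM
    exact mul_left_inj' (Real.sqrt_pos.mpr (by linarith)).ne'

/-- In the equal-order case `M_o = M_b = M` with fixed `L̃_{b/o}`,
the unique minimizer of the bound
`f(L̃_o) = 1 + (c/L̃_o)·max{(1+4L̃_o²)^M/(1+4L̃_{b/o}²)^M, 1}` (second branch of
Theorem `th_diffusion_bound`, `c > 0`) over the domain `L̃_o √(2M-1) > 1/2` is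
`L̃_o = L̃_{b/o}`; equivalently, in terms of Daley length-scales `D = L√(2M-3)`
(for `M > 1`), the minimum is attained when `D_o = D_b`. -/
theorem stmt16 (c Lb : ℝ) (hc : 0 < c) (hLb : 0 < Lb)
    (M : ℕ) (hM : 2 ≤ M)
    (hLbDom : 1 / 2 < Lb * Real.sqrt (2 * M - 1))
    (f : ℝ → ℝ)
    (hf : ∀ x : ℝ, f x =
      1 + (c / x) * max ((1 + 4 * x ^ 2) ^ M / (1 + 4 * Lb ^ 2) ^ M) 1) :
    (∀ y : ℝ, 1 / 2 < y * Real.sqrt (2 * M - 1) → y ≠ Lb → f Lb < f y) ∧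
    (∀ Lo : ℝ, 0 < Lo →
      (Lo * Real.sqrt (2 * M - 3) = Lb * Real.sqrt (2 * M - 3) ↔ Lo = Lb)) :=
  stmt16_general c Lb hc M hM hLbDom f hf
end

section
/- For any i in {0,...,m−1} and r in {0,...,ζ−1}, one has Σ_{r=0}^{ζ−1}[1+4L̃² sin²(π(i+rm)/(ζm))]^{−M} ≤ Σ_{r=0}^{ζ−1}[1+4L̃² sin²(πr/ζ)]^{−M} for all L̃ > 0 and positive integer M; i.e., the aliased eigenvalue sum of a periodic diffusion covariance under uniform subsampling is maximized at the zero-frequency mode. -/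
/-!
Since `1 + 4L² sin² t = (1 + 2L²) - 2L² cos 2t`, each summand is `f (cos θ)` for a negative binomial
series `f` with nonnegative coefficients, so it suffices to compare the power sums
`∑ r, cos (φ + 2πr/ζ) ^ k` with their value at `φ = 0`. Expanding `cos ^ k` as a nonnegative
combination of the `cos ((2l - k) x)` reduces this to the aliasing identity
`∑ r, cos (φ + 2πjr/ζ) = if ζ ∣ j then ζ cos φ else 0`, which is largest at `φ = 0`.
-/

open Finset Real

lemma cos_pow_eq_sum_cos (x : ℝ) (k : ℕ) :
    cos x ^ k = ∑ l ∈ range (k + 1), (k.choose l / 2 ^ k : ℝ) * cos ((2 * l - k : ℤ) * x) := by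
  have hpow : (cos x : ℂ) ^ k = ∑ l ∈ range (k + 1),
      ((k.choose l / 2 ^ k : ℝ) : ℂ) * Complex.exp (((2 * l - k : ℤ) * x : ℝ) * Complex.I) := by
    rw [Complex.ofReal_cos, Complex.cos, div_pow, add_pow, sum_div]
    refine sum_congr rfl fun l hl ↦ ?_
    have hlk : l ≤ k := Nat.lt_succ_iff.mp (mem_range.mp hl)
    rw [← Complex.exp_nat_mul, ← Complex.exp_nat_mul, ← Complex.exp_add]
    push_cast [Nat.cast_sub hlk]
    ring_nf
  rw [← Complex.ofReal_re (cos x ^ k), Complex.ofReal_pow, hpow, Complex.re_sum]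
  refine sum_congr rfl fun l _ ↦ ?_
  rw [Complex.re_ofReal_mul, Complex.exp_ofReal_mul_I_re]

lemma sum_range_cos_add_int_mul (ζ : ℕ) (j : ℤ) (φ : ℝ) :
    ∑ r ∈ range ζ, cos (φ + j * (2 * π * r / ζ)) = if (ζ : ℤ) ∣ j then ζ * cos φ else 0 := by
  rcases Nat.eq_zero_or_pos ζ with rfl | hζ
  · simp
  have hζ' : (ζ : ℝ) ≠ 0 := by positivity
  have hζc : (ζ : ℂ) ≠ 0 := by exact_mod_cast hζ'
  set z : ℂ := Complex.exp ((j * (2 * π / ζ) : ℝ) * Complex.I)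
  have hterm (r : ℕ) : Complex.exp ((φ + j * (2 * π * r / ζ) : ℝ) * Complex.I)
      = Complex.exp (φ * Complex.I) * z ^ r := by
    rw [← Complex.exp_nat_mul, ← Complex.exp_add]
    push_cast
    ring_nf
  have hsum : ∑ r ∈ range ζ, cos (φ + j * (2 * π * r / ζ))
      = (Complex.exp (φ * Complex.I) * ∑ r ∈ range ζ, z ^ r).re := by
    rw [mul_sum, Complex.re_sum]
    exact sum_congr rfl fun r _ ↦ by rw [← hterm, Complex.exp_ofReal_mul_I_re]
  have hz : z = 1 ↔ (ζ : ℤ) ∣ j := by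
    rw [Complex.exp_eq_one_iff]
    constructor
    · rintro ⟨n, hn⟩
      have him : j * (2 * π / ζ) = n * (2 * π) := by simpa using congrArg Complex.im hn
      refine ⟨n, ?_⟩
      have : (j : ℝ) = ζ * n := by
        field_simp at him
        nlinarith [pi_pos]
      exact_mod_cast this
    · rintro ⟨n, rfl⟩
      exact ⟨n, by push_cast; field_simp⟩
  rw [hsum]
  split_ifs with hj
  · rw [hz.mpr hj]
    simp only [one_pow, sum_const, card_range, nsmul_eq_mul, mul_one]
    rw [mul_comm, ← Complex.ofReal_natCast, Complex.re_ofReal_mul, Complex.exp_ofReal_mul_I_re]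
  · have hzζ : z ^ ζ = 1 := by
      rw [← Complex.exp_nat_mul, Complex.exp_eq_one_iff]
      exact ⟨j, by push_cast; field_simp⟩
    rw [geom_sum_eq (mt hz.mp hj), hzζ]
    simp

lemma sum_range_cos_add_int_mul_le (ζ : ℕ) (j : ℤ) (φ : ℝ) :
    ∑ r ∈ range ζ, cos (φ + j * (2 * π * r / ζ)) ≤ ∑ r ∈ range ζ, cos (j * (2 * π * r / ζ)) := by
  have hzero := sum_range_cos_add_int_mul ζ j 0
  simp only [zero_add, cos_zero, mul_one] at hzero
  rw [sum_range_cos_add_int_mul, hzero]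
  split_ifs
  · exact mul_le_of_le_one_right (Nat.cast_nonneg ζ) (cos_le_one φ)
  · rfl

lemma sum_range_cos_add_pow_le (ζ k : ℕ) (φ : ℝ) :
    ∑ r ∈ range ζ, cos (φ + 2 * π * r / ζ) ^ k ≤ ∑ r ∈ range ζ, cos (2 * π * r / ζ) ^ k := by
  simp_rw [cos_pow_eq_sum_cos _ k]
  rw [sum_comm, sum_comm (s := range ζ)]
  refine sum_le_sum fun l _ ↦ ?_
  rw [← mul_sum, ← mul_sum]
  refine mul_le_mul_of_nonneg_left ?_ (by positivity)
  simp_rw [mul_add]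
  exact sum_range_cos_add_int_mul_le ζ _ _

lemma sum_range_comp_cos_add_le {f : ℝ → ℝ} {c : ℕ → ℝ} (hc : ∀ n, 0 ≤ c n)
    (hf : ∀ x ∈ Set.Icc (-1 : ℝ) 1, HasSum (fun n ↦ c n * x ^ n) (f x)) (ζ : ℕ) (φ : ℝ) :
    ∑ r ∈ range ζ, f (cos (φ + 2 * π * r / ζ)) ≤ ∑ r ∈ range ζ, f (cos (2 * π * r / ζ)) := by
  have hsum (θ : ℕ → ℝ) : HasSum (fun n ↦ c n * ∑ r ∈ range ζ, cos (θ r) ^ n)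
      (∑ r ∈ range ζ, f (cos (θ r))) := by
    simp_rw [mul_sum]
    exact hasSum_sum fun r _ ↦ hf _ ⟨neg_one_le_cos _, cos_le_one _⟩
  exact hasSum_le (fun n ↦ mul_le_mul_of_nonneg_left (sum_range_cos_add_pow_le ζ n φ) (hc n))
    (hsum _) (hsum _)

lemma hasSum_inv_sub_mul_pow {a b x : ℝ} (h : |b * x| < a) (M : ℕ) :
    HasSum (fun n ↦ ((n + M).choose M * (b / a) ^ n / a ^ (M + 1) : ℝ) * x ^ n)
      ((a - b * x) ^ (M + 1))⁻¹ := by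
  have ha : 0 < a := (abs_nonneg _).trans_lt h
  have hr : ‖b * x / a‖ < 1 := by
    rwa [Real.norm_eq_abs, abs_div, abs_of_pos ha, div_lt_one ha]
  have hsum := (hasSum_choose_mul_geometric_of_norm_lt_one M hr).mul_right (a ^ (M + 1))⁻¹
  have hval : 1 / (1 - b * x / a) ^ (M + 1) * (a ^ (M + 1))⁻¹ = ((a - b * x) ^ (M + 1))⁻¹ := by
    rw [one_sub_div ha.ne', div_pow, one_div_div, div_mul_eq_mul_div,
      mul_inv_cancel₀ (by positivity), one_div]
  rw [hval] at hsum
  exact hsum.congr_fun fun n ↦ by ring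

theorem stmt18_general (m ζ : ℕ) (L : ℝ) (M : ℕ) :
    ∀ i : ℕ, i < m →
      ∑ r ∈ Finset.range ζ,
        ((1 + 4 * L ^ 2 * Real.sin (Real.pi * ((i : ℝ) + r * m) / (ζ * m)) ^ 2) ^ M)⁻¹ ≤
      ∑ r ∈ Finset.range ζ,
        ((1 + 4 * L ^ 2 * Real.sin (Real.pi * (r : ℝ) / ζ) ^ 2) ^ M)⁻¹ := by
  intro i hi
  cases M with
  | zero => simp
  | succ M =>
  have hsin (t : ℝ) : 1 + 4 * L ^ 2 * sin t ^ 2 = 1 + 2 * L ^ 2 - 2 * L ^ 2 * cos (2 * t) := by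
    rw [sin_sq_eq_half_sub]
    ring
  have hm : (m : ℝ) ≠ 0 := Nat.cast_ne_zero.mpr (by omega)
  have hseries (x : ℝ) (hx : x ∈ Set.Icc (-1) 1) := hasSum_inv_sub_mul_pow
    (a := 1 + 2 * L ^ 2) (b := 2 * L ^ 2) (x := x) (by
      rw [abs_mul, abs_of_nonneg (by positivity : (0 : ℝ) ≤ 2 * L ^ 2)]
      nlinarith [abs_le.mpr hx]) M
  calc ∑ r ∈ range ζ, ((1 + 4 * L ^ 2 * sin (π * ((i : ℝ) + r * m) / (ζ * m)) ^ 2) ^ (M + 1))⁻¹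
      = ∑ r ∈ range ζ, ((1 + 2 * L ^ 2 - 2 * L ^ 2 *
          cos (2 * π * i / (ζ * m) + 2 * π * r / ζ)) ^ (M + 1))⁻¹ := by
        refine sum_congr rfl fun r hr ↦ ?_
        have hζ : (ζ : ℝ) ≠ 0 := Nat.cast_ne_zero.mpr (by have := mem_range.mp hr; omega)
        rw [hsin]
        congr 4
        field_simp
    _ ≤ ∑ r ∈ range ζ, ((1 + 2 * L ^ 2 - 2 * L ^ 2 * cos (2 * π * r / ζ)) ^ (M + 1))⁻¹ :=
        sum_range_comp_cos_add_le (fun n ↦ by positivity) hseries ζ _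
    _ = _ := by
        refine sum_congr rfl fun r _ ↦ ?_
        rw [hsin]
        ring_nf

/-- For any `i ∈ {0,…,m-1}`, the aliased eigenvalue sum of a periodic
diffusion covariance under uniform subsampling is maximized at the zero-frequency
mode: `Σ_{r<ζ}[1+4L̃² sin²(π(i+rm)/(ζm))]^{-M} ≤ Σ_{r<ζ}[1+4L̃² sin²(πr/ζ)]^{-M}`
for all `L̃ > 0` and positive integers `M`. -/
theorem stmt18 (m ζ : ℕ) (hm : 0 < m) (hζ : 0 < ζ)
    (L : ℝ) (hL : 0 < L) (M : ℕ) (hM : 0 < M) :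
    ∀ i : ℕ, i < m →
      ∑ r ∈ Finset.range ζ,
        ((1 + 4 * L ^ 2 * Real.sin (Real.pi * ((i : ℝ) + r * m) / (ζ * m)) ^ 2) ^ M)⁻¹ ≤
      ∑ r ∈ Finset.range ζ,
        ((1 + 4 * L ^ 2 * Real.sin (Real.pi * (r : ℝ) / ζ) ^ 2) ^ M)⁻¹ :=
  stmt18_general m ζ L M
end
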